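/- arXiv:2604.09137 — 10 statements merged into one kernel-verified Lean document; each statement's English description precedes it below -/
import Mathlib

section
/- Let L be a Lie algebra over a field K, and let D and S be Lie subalgebras of L with [d,s] = 0 for all d ∈ D, s ∈ S, and D ∩ S = {0}. Let ι be a finite index type, θ : ι → D, Ω : ι → S, c : ι → ι → ι → K with [θ I + Ω I, θ J + Ω J] = Σ_{K'} c I J K' • (θ K' + Ω K') for all I, J. Assume moreover that the family (θ I)_{I ∈ ι} (viewed in L) is linearly independent over K. Then the linear span V of {θ I} is closed under the Lie bracket of L, and the unique K-linear map ρ : V → L determined by ρ(θ I) = Ω I takes values in S and satisfies ρ([x,y]) = [ρ(x), ρ(y)] for all x, y ∈ V. -/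
/-!
Because `D` and `S` commute and meet trivially, the bracket of `θ I + Ω I` with `θ J + Ω J`
decomposes uniquely into a `D`-part `⁅θ I, θ J⁆` and an `S`-part `⁅Ω I, Ω J⁆`, so the closure
relation holds for `θ` and for `Ω` separately, with the same structure constants `c`. The first
half makes the span of the `θ I` a Lie subalgebra; by the second half the brackets
`(x, y) ↦ ρ ⁅x, y⁆` and `(x, y) ↦ ⁅ρ x, ρ y⁆` are bilinear maps agreeing on the spanning
family, hence equal.
-/

open Submodule

section Linear

variable {R M N : Type*} [CommRing R] [AddCommGroup M] [Module R M] [AddCommGroup N] [Module R N]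
  {ι : Type*} {v : ι → M}

theorem Submodule.eq_and_eq_of_add_eq_add {p q : Submodule R M} (hpq : Disjoint p q)
    {x x' y y' : M} (hx : x ∈ p) (hx' : x' ∈ p) (hy : y ∈ q) (hy' : y' ∈ q)
    (h : x + y = x' + y') : x = x' ∧ y = y' := by
  have hxy : x - x' = y' - y := by rw [sub_eq_sub_iff_add_eq_add, h, add_comm]
  have hx0 : x - x' = 0 := disjoint_def.mp hpq _ (sub_mem hx hx') (hxy ▸ sub_mem hy' hy)
  exact ⟨sub_eq_zero.mp hx0, (sub_eq_zero.mp (hxy ▸ hx0)).symm⟩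

theorem Submodule.span_range_codRestrict_eq_top :
    span R (Set.range fun i =>
      (⟨v i, subset_span (Set.mem_range_self i)⟩ : span R (Set.range v))) = ⊤ := by
  apply map_injective_of_injective (span R (Set.range v)).injective_subtype
  rw [map_subtype_top, map_span, ← Set.range_comp]
  rfl

theorem LinearMap.range_eq_span_range_of_apply_eq {w : ι → N}
    (ρ : span R (Set.range v) →ₗ[R] N)
    (hρ : ∀ i, ρ ⟨v i, subset_span (Set.mem_range_self i)⟩ = w i) :
    LinearMap.range ρ = span R (Set.range w) := by
  rw [LinearMap.range_eq_map, ← span_range_codRestrict_eq_top, map_span, ← Set.range_comp]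
  exact congrArg _ (congrArg Set.range (funext hρ))

theorem LinearIndependent.existsUnique_linearMap_span (hv : LinearIndependent R v) (w : ι → N) :
    ∃! ρ : span R (Set.range v) →ₗ[R] N,
      ∀ i, ρ ⟨v i, subset_span (Set.mem_range_self i)⟩ = w i := by
  set b := Module.Basis.span hv
  have hb : ∀ i, b i = ⟨v i, subset_span (Set.mem_range_self i)⟩ := Module.Basis.span_apply hv
  refine ⟨b.constr R w, fun i => by rw [← hb, b.constr_basis], fun ρ hρ => b.ext fun i => ?_⟩
  rw [hb, hρ, ← hb, b.constr_basis]

end Linear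

section Lie

variable {R L : Type*} [CommRing R] [LieRing L] [LieAlgebra R L]

theorem lie_add_add_of_lie_eq_zero {a b c d : L} (had : ⁅a, d⁆ = 0) (hbc : ⁅b, c⁆ = 0) :
    ⁅a + b, c + d⁆ = ⁅a, c⁆ + ⁅b, d⁆ := by
  rw [add_lie, lie_add, lie_add, had, hbc, add_zero, zero_add]

theorem lie_mem_span_of_forall_lie_mem_span {s : Set L}
    (hs : ∀ a ∈ s, ∀ b ∈ s, ⁅a, b⁆ ∈ span R s) {x y : L}
    (hx : x ∈ span R s) (hy : y ∈ span R s) : ⁅x, y⁆ ∈ span R s := by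
  have hle : map₂ (LieAlgebra.ad R L : L →ₗ[R] Module.End R L) (span R s) (span R s) ≤
      span R s := by
    rw [map₂_span_span, span_le]
    rintro _ ⟨a, ha, b, hb, rfl⟩
    simpa using hs a ha b hb
  simpa using hle (apply_mem_map₂ _ hx hy)

theorem LieSubalgebra.lie_eq_and_lie_eq_of_lie_add_eq_add {D S : LieSubalgebra R L}
    (hcomm : ∀ d ∈ D, ∀ s ∈ S, ⁅d, s⁆ = 0) (hdisj : Disjoint D S) {d d' a s s' b : L}
    (hd : d ∈ D) (hd' : d' ∈ D) (ha : a ∈ D) (hs : s ∈ S) (hs' : s' ∈ S) (hb : b ∈ S)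
    (h : ⁅d + s, d' + s'⁆ = a + b) : ⁅d, d'⁆ = a ∧ ⁅s, s'⁆ = b := by
  have hsd' : ⁅s, d'⁆ = 0 := by rw [← lie_skew, hcomm d' hd' s hs, neg_zero]
  rw [lie_add_add_of_lie_eq_zero (hcomm d hd s' hs') hsd'] at h
  exact eq_and_eq_of_add_eq_add (disjoint_toSubmodule.mpr hdisj) (D.lie_mem hd hd') ha
    (S.lie_mem hs hs') hb h

variable {ι : Type*} [Fintype ι]

theorem LieSubalgebra.lie_eq_sum_and_lie_eq_sum_of_lie_add_eq_sum {D S : LieSubalgebra R L}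
    (hcomm : ∀ d ∈ D, ∀ s ∈ S, ⁅d, s⁆ = 0) (hdisj : Disjoint D S) {θ Ω : ι → L}
    (hθ : ∀ i, θ i ∈ D) (hΩ : ∀ i, Ω i ∈ S) (c : ι → ι → ι → R)
    (h : ∀ i j, ⁅θ i + Ω i, θ j + Ω j⁆ = ∑ k, c i j k • (θ k + Ω k)) (i j : ι) :
    ⁅θ i, θ j⁆ = ∑ k, c i j k • θ k ∧ ⁅Ω i, Ω j⁆ = ∑ k, c i j k • Ω k := by
  refine lie_eq_and_lie_eq_of_lie_add_eq_add hcomm hdisj (hθ i) (hθ j)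
    (sum_mem fun k _ => D.smul_mem _ (hθ k)) (hΩ i) (hΩ j)
    (sum_mem fun k _ => S.smul_mem _ (hΩ k)) ?_
  simp only [h, smul_add, Finset.sum_add_distrib]

theorem lie_mem_span_range_of_lie_eq_sum {v : ι → L} (c : ι → ι → ι → R)
    (hv : ∀ i j, ⁅v i, v j⁆ = ∑ k, c i j k • v k) {x y : L}
    (hx : x ∈ span R (Set.range v)) (hy : y ∈ span R (Set.range v)) :
    ⁅x, y⁆ ∈ span R (Set.range v) := by
  refine lie_mem_span_of_forall_lie_mem_span ?_ hx hy
  rintro _ ⟨i, rfl⟩ _ ⟨j, rfl⟩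
  rw [hv]
  exact sum_mem fun k _ => smul_mem _ _ (subset_span (Set.mem_range_self k))

theorem LinearMap.map_lie_of_lie_eq_sum {v w : ι → L} (c : ι → ι → ι → R)
    (hv : ∀ i j, ⁅v i, v j⁆ = ∑ k, c i j k • v k)
    (hw : ∀ i j, ⁅w i, w j⁆ = ∑ k, c i j k • w k) (ρ : span R (Set.range v) →ₗ[R] L)
    (hρ : ∀ i, ρ ⟨v i, subset_span (Set.mem_range_self i)⟩ = w i)
    (x y : span R (Set.range v)) (h : ⁅(x : L), (y : L)⁆ ∈ span R (Set.range v)) :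
    ρ ⟨⁅(x : L), (y : L)⁆, h⟩ = ⁅ρ x, ρ y⁆ := by
  set ad := (LieAlgebra.ad R L : L →ₗ[R] Module.End R L)
  have hV : ∀ a b : span R (Set.range v),
      ad.compl₁₂ (span R (Set.range v)).subtype (span R (Set.range v)).subtype a b ∈
        LinearMap.range (span R (Set.range v)).subtype := fun a b => by
    rw [range_subtype]
    exact lie_mem_span_range_of_lie_eq_sum c hv a.2 b.2
  set bracketV := LinearMap.codRestrict₂ _ _ (span R (Set.range v)).injective_subtype hV
  have hbracketV : ∀ a b, (bracketV a b : L) = ⁅(a : L), (b : L)⁆ := fun a b =>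
    (LinearMap.codRestrict₂_apply _ _ _ hV a b).trans (by simp [ad])
  have hbilin : bracketV.compr₂ ρ = ad.compl₁₂ ρ ρ := by
    refine LinearMap.ext_on_range span_range_codRestrict_eq_top fun i => ?_
    refine LinearMap.ext_on_range span_range_codRestrict_eq_top fun j => ?_
    have hij : bracketV ⟨v i, subset_span (Set.mem_range_self i)⟩
        ⟨v j, subset_span (Set.mem_range_self j)⟩ =
          ∑ k, c i j k • ⟨v k, subset_span (Set.mem_range_self k)⟩ := by
      ext
      simp [hbracketV, hv]
    simp only [LinearMap.compr₂_apply, LinearMap.compl₁₂_apply, hij, map_sum, map_smul, hρ]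
    simp [ad, hw]
  calc ρ ⟨⁅(x : L), (y : L)⁆, h⟩ = ρ (bracketV x y) :=
        congrArg ρ (Subtype.ext (hbracketV x y).symm)
    _ = ⁅ρ x, ρ y⁆ := by simpa [ad] using LinearMap.congr_fun₂ hbilin x y

end Lie

/-- In a consistent invariant subsector, the `𝔤_S`-valued part `Ω` of the
embedding tensor defines a (possibly non-faithful) Lie algebra morphism `ρ`
from the gauge algebra spanned by the `𝔤_D`-valued parts `θ_I`, via
`Ω_I = ρ(θ_I)`. -/
theorem omega_is_representation_of_gauge_algebra
    {K : Type*} [Field K] {L : Type*} [LieRing L] [LieAlgebra K L]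
    (D S : LieSubalgebra K L)
    (hcomm : ∀ d ∈ D, ∀ s ∈ S, ⁅d, s⁆ = 0)
    (hdisj : D ⊓ S = ⊥)
    {ι : Type*} [Fintype ι]
    (θ : ι → D) (Ω : ι → S) (c : ι → ι → ι → K)
    (hclose : ∀ I J : ι,
      ⁅((θ I : L) + (Ω I : L)), ((θ J : L) + (Ω J : L))⁆ =
        ∑ K' : ι, c I J K' • ((θ K' : L) + (Ω K' : L)))
    (hind : LinearIndependent K (fun I : ι => (θ I : L))) :
    (∀ x ∈ Submodule.span K (Set.range fun I : ι => (θ I : L)),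
      ∀ y ∈ Submodule.span K (Set.range fun I : ι => (θ I : L)),
        ⁅x, y⁆ ∈ Submodule.span K (Set.range fun I : ι => (θ I : L))) ∧
    (∃! ρ : (Submodule.span K (Set.range fun I : ι => (θ I : L))) →ₗ[K] L,
      ∀ I : ι,
        ρ ⟨(θ I : L), Submodule.subset_span (Set.mem_range_self I)⟩ = (Ω I : L)) ∧
    (∀ ρ : (Submodule.span K (Set.range fun I : ι => (θ I : L))) →ₗ[K] L,
      (∀ I : ι,
        ρ ⟨(θ I : L), Submodule.subset_span (Set.mem_range_self I)⟩ = (Ω I : L)) →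
      (∀ v, ρ v ∈ S) ∧
      (∀ x y : (Submodule.span K (Set.range fun I : ι => (θ I : L))),
        ∀ h : ⁅(x : L), (y : L)⁆ ∈
            Submodule.span K (Set.range fun I : ι => (θ I : L)),
          ρ ⟨⁅(x : L), (y : L)⁆, h⟩ = ⁅ρ x, ρ y⁆)) := by
  have hsplit := LieSubalgebra.lie_eq_sum_and_lie_eq_sum_of_lie_add_eq_sum hcomm
    (disjoint_iff.mpr hdisj) (fun I => (θ I).2) (fun I => (Ω I).2) c hclose
  have hθ I J := (hsplit I J).1
  have hΩ I J := (hsplit I J).2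
  refine ⟨fun x hx y hy => lie_mem_span_range_of_lie_eq_sum c hθ hx hy,
    hind.existsUnique_linearMap_span _,
    fun ρ hρ => ⟨fun v => ?_, ρ.map_lie_of_lie_eq_sum c hθ hΩ hρ⟩⟩
  have hρS : LinearMap.range ρ ≤ S.toSubmodule := by
    rw [ρ.range_eq_span_range_of_apply_eq hρ, span_le]
    exact Set.range_subset_iff.mpr fun I => (Ω I).2
  exact hρS (LinearMap.mem_range_self ρ v)
end

section
/- For all real numbers χ and φ, the complex numbers f₁ = e^{−φ/2}(−iχ + e^{φ} + 1)/(2√2) and f₂ = e^{−φ/2}(−iχ + e^{φ} − 1)/(2√2) satisfy |f₁|² − |f₂|² = 1/2; consequently 8|f₂|² − 12|f₁|² + 3 = 2|f₂|² − 6|f₁|², i.e. the N=8 scalar potential of the SU(4)_S-invariant subsector coincides with the N=4 scalar potential. -/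
/-- Fermion-shift building blocks of the SU(4)_S-invariant subsector. -/
noncomputable def f₁ (χ φ : ℝ) : ℂ :=
  (Real.exp (-φ / 2) : ℂ) * (-(Complex.I * (χ : ℂ)) + (Real.exp φ : ℂ) + 1) /
    (2 * (Real.sqrt 2 : ℂ))

noncomputable def f₂ (χ φ : ℝ) : ℂ :=
  (Real.exp (-φ / 2) : ℂ) * (-(Complex.I * (χ : ℂ)) + (Real.exp φ : ℂ) - 1) /
    (2 * (Real.sqrt 2 : ℂ))

/-!
Both fermion shifts are the real multiple `k = e^{-φ/2}/(2√2)` of `z ± 1` with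
`z = e^φ - iχ`. Since `|z + 1|² - |z - 1|² = 4 Re z = 4 e^φ` and `k² = e^{-φ}/8`,
the difference `|f₁|² - |f₂|²` is `1/2` whatever `χ` and `φ` are; the two potentials
differ by `6 (|f₁|² - |f₂|²) - 3 = 0`.
-/

open Complex

theorem Complex.sq_norm_add_one_sub_sq_norm_sub_one (z : ℂ) :
    ‖z + 1‖ ^ 2 - ‖z - 1‖ ^ 2 = 4 * z.re := by
  simp only [Complex.sq_norm, normSq_apply, add_re, sub_re, add_im, sub_im, one_re, one_im]
  ring

theorem f₁_eq (χ φ : ℝ) :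
    f₁ χ φ = ((Real.exp (-φ / 2) / (2 * √2) : ℝ) : ℂ) * ((Real.exp φ - χ * I) + 1) := by
  unfold f₁
  push_cast
  ring

theorem f₂_eq (χ φ : ℝ) :
    f₂ χ φ = ((Real.exp (-φ / 2) / (2 * √2) : ℝ) : ℂ) * ((Real.exp φ - χ * I) - 1) := by
  unfold f₂
  push_cast
  ring

theorem sq_exp_neg_half_div_two_sqrt_two_mul_exp (φ : ℝ) :
    (Real.exp (-φ / 2) / (2 * √2)) ^ 2 * Real.exp φ = 1 / 8 := by
  have hexp : Real.exp (-φ / 2) ^ 2 * Real.exp φ = 1 := by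
    rw [← Real.exp_nat_mul, ← Real.exp_add, ← Real.exp_zero]
    congr 1
    push_cast
    ring
  rw [div_pow, mul_pow, Real.sq_sqrt zero_le_two, div_mul_eq_mul_div, hexp]
  norm_num

theorem sq_norm_f₁_sub_sq_norm_f₂ (χ φ : ℝ) : ‖f₁ χ φ‖ ^ 2 - ‖f₂ χ φ‖ ^ 2 = 1 / 2 := by
  rw [f₁_eq, f₂_eq, norm_mul, norm_mul, mul_pow, mul_pow, ← mul_sub,
    sq_norm_add_one_sub_sq_norm_sub_one, norm_real, Real.norm_eq_abs, sq_abs]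
  simp only [sub_re, ofReal_re, mul_re, ofReal_im, I_re, I_im, mul_zero, mul_one, sub_zero]
  linarith [sq_exp_neg_half_div_two_sqrt_two_mul_exp φ]

/-- `|f₁|² − |f₂|² = 1/2`, hence the `N = 8` scalar potential
`8|f₂|² − 12|f₁|² + 3` of the SU(4)_S-invariant subsector coincides with the
`N = 4` potential `2|f₂|² − 6|f₁|²`. -/
theorem potential_N8_eq_N4 (χ φ : ℝ) :
    ‖f₁ χ φ‖ ^ 2 - ‖f₂ χ φ‖ ^ 2 = 1 / 2 ∧
    8 * ‖f₂ χ φ‖ ^ 2 - 12 * ‖f₁ χ φ‖ ^ 2 + 3 =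
      2 * ‖f₂ χ φ‖ ^ 2 - 6 * ‖f₁ χ φ‖ ^ 2 := by
  have hdiff := sq_norm_f₁_sub_sq_norm_f₂ χ φ
  exact ⟨hdiff, by linarith⟩
end

section
/- Define V : ℝ² → ℝ by V(χ,φ) = 2|f₂(χ,φ)|² − 6|f₁(χ,φ)|², where f₁ = e^{−φ/2}(−iχ + e^{φ} + 1)/(2√2) and f₂ = e^{−φ/2}(−iχ + e^{φ} − 1)/(2√2). Then (i) V(χ,φ) = −(1/2)(χ² e^{−φ} + e^{φ} + e^{−φ} + 4) for all χ, φ; (ii) the partial derivatives ∂V/∂χ and ∂V/∂φ vanish simultaneously at (χ,φ) if and only if (χ,φ) = (0,0); and (iii) V(0,0) = −3. -/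
/-- The scalar potential of the pure N=4 subsector. -/
noncomputable def Vpot (χ φ : ℝ) : ℝ :=
  2 * ‖f₂ χ φ‖ ^ 2 - 6 * ‖f₁ χ φ‖ ^ 2

/-! Both shifts have squared modulus `e^{-φ} (χ² + (e^φ ± 1)²) / 8`, which makes `V` explicit.
Then `∂_χ V = -χ e^{-φ}` vanishes only at `χ = 0`, where `∂_φ V = -sinh φ` vanishes only at
`φ = 0`. -/

open Real

lemma sq_norm_ofReal_mul_div_two_sqrt_two (r a b : ℝ) :
    ‖(r : ℂ) * (-(Complex.I * a) + b) / (2 * (√2 : ℂ))‖ ^ 2 = r ^ 2 * (a ^ 2 + b ^ 2) / 8 := by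
  have h_sqrt : ‖(2 * (√2 : ℂ))‖ ^ 2 = 8 := by
    rw [norm_mul, Complex.norm_real, Complex.norm_two, mul_pow, norm_of_nonneg (sqrt_nonneg 2),
      sq_sqrt zero_le_two]
    norm_num
  have h_num : ‖-(Complex.I * a) + b‖ ^ 2 = a ^ 2 + b ^ 2 := by
    rw [show -(Complex.I * a) + b = (b : ℂ) + (-a : ℝ) * Complex.I by push_cast; ring,
      Complex.sq_norm, Complex.normSq_add_mul_I]
    ring
  rw [norm_div, norm_mul, div_pow, mul_pow, h_sqrt, h_num, Complex.norm_real, norm_eq_abs, sq_abs]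

lemma exp_neg_half_sq (φ : ℝ) : exp (-φ / 2) ^ 2 = exp (-φ) := by
  rw [← exp_nat_mul]; ring_nf

lemma sq_norm_f₁ (χ φ : ℝ) : ‖f₁ χ φ‖ ^ 2 = exp (-φ) * (χ ^ 2 + (exp φ + 1) ^ 2) / 8 := by
  rw [f₁, add_assoc, ← Complex.ofReal_one, ← Complex.ofReal_add,
    sq_norm_ofReal_mul_div_two_sqrt_two, exp_neg_half_sq]

lemma sq_norm_f₂ (χ φ : ℝ) : ‖f₂ χ φ‖ ^ 2 = exp (-φ) * (χ ^ 2 + (exp φ - 1) ^ 2) / 8 := by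
  rw [f₂, add_sub_assoc, ← Complex.ofReal_one, ← Complex.ofReal_sub,
    sq_norm_ofReal_mul_div_two_sqrt_two, exp_neg_half_sq]

lemma Vpot_eq (χ φ : ℝ) :
    Vpot χ φ = -(1 / 2) * (χ ^ 2 * exp (-φ) + exp φ + exp (-φ) + 4) := by
  have h_inv : exp (-φ) * exp φ = 1 := by rw [← exp_add, neg_add_cancel, exp_zero]
  rw [Vpot, sq_norm_f₁, sq_norm_f₂]
  linear_combination (-(1 / 2) * exp φ - 2) * h_inv

lemma hasDerivAt_Vpot_left (χ φ : ℝ) :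
    HasDerivAt (fun x => Vpot x φ) (-χ * exp (-φ)) χ := by
  have h_eq : (fun x => Vpot x φ) =
      fun x => -(1 / 2) * (x ^ 2 * exp (-φ) + (exp φ + exp (-φ) + 4)) :=
    funext fun x => by rw [Vpot_eq]; ring
  rw [h_eq]
  exact ((((hasDerivAt_pow 2 χ).mul_const (exp (-φ))).add_const _).const_mul _).congr_deriv
    (by push_cast; ring)

lemma hasDerivAt_Vpot_right (χ φ : ℝ) :
    HasDerivAt (fun y => Vpot χ y) ((χ ^ 2 + 1) * exp (-φ) / 2 - exp φ / 2) φ := by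
  have h_eq : (fun y => Vpot χ y) =
      fun y => -(1 / 2) * ((χ ^ 2 * exp (-y) + exp y + exp (-y)) + 4) :=
    funext fun y => Vpot_eq χ y
  have h_neg : HasDerivAt (fun y => exp (-y)) (-exp (-φ)) φ := by
    simpa using (hasDerivAt_neg φ).exp
  rw [h_eq]
  exact (((((h_neg.const_mul (χ ^ 2)).add (hasDerivAt_exp φ)).add h_neg).add_const 4).const_mul
    _).congr_deriv (by ring)

/-- (i) a closed form for the potential, (ii) its critical points are exactly
`(χ, φ) = (0, 0)`, the `N = 4` AdS₄ vacuum, and (iii) `V(0,0) = −3`. -/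
theorem potential_closed_form_and_critical_point :
    (∀ χ φ : ℝ,
      Vpot χ φ =
        -(1 / 2) * (χ ^ 2 * Real.exp (-φ) + Real.exp φ + Real.exp (-φ) + 4)) ∧
    (∀ χ φ : ℝ,
      (deriv (fun x : ℝ => Vpot x φ) χ = 0 ∧
       deriv (fun y : ℝ => Vpot χ y) φ = 0) ↔ (χ = 0 ∧ φ = 0)) ∧
    Vpot 0 0 = -3 := by
  refine ⟨Vpot_eq, fun χ φ => ?_, by rw [Vpot_eq]; norm_num⟩
  rw [(hasDerivAt_Vpot_left χ φ).deriv, (hasDerivAt_Vpot_right χ φ).deriv, neg_mul,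
    neg_eq_zero, mul_eq_zero, or_iff_left (exp_ne_zero _)]
  refine and_congr_right fun hχ => ?_
  rw [hχ, sub_eq_zero, zero_pow two_ne_zero, zero_add, one_mul, div_left_inj' two_ne_zero,
    exp_eq_exp]
  constructor <;> intro h <;> linarith
end

section
/- Let q₁, q₂ be real numbers with 0 < q₁ < 2, 0 < q₂ < 2 and Δ₋ > 0. Then the four roots are ordered as w₁ < w₂ < 0 < w₃ < w₄. -/
/-- The four roots of the spindle quartic are ordered `w₁ < w₂ < 0 < w₃ < w₄`. -/
theorem spindle_roots_ordered (q₁ q₂ : ℝ)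
    (hq₁ : 0 < q₁) (hq₁' : q₁ < 2) (hq₂ : 0 < q₂) (hq₂' : q₂ < 2)
    (hΔm : 0 < 4 - 4 * (q₁ + q₂) + (q₁ - q₂) ^ 2)
    (w₁ w₂ w₃ w₄ : ℝ)
    (hw₁ : w₁ = (-2 - (q₁ + q₂) - Real.sqrt (4 + 4 * (q₁ + q₂) + (q₁ - q₂) ^ 2)) / 2)
    (hw₂ : w₂ = (-2 - (q₁ + q₂) + Real.sqrt (4 + 4 * (q₁ + q₂) + (q₁ - q₂) ^ 2)) / 2)
    (hw₃ : w₃ = (2 - (q₁ + q₂) - Real.sqrt (4 - 4 * (q₁ + q₂) + (q₁ - q₂) ^ 2)) / 2)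
    (hw₄ : w₄ = (2 - (q₁ + q₂) + Real.sqrt (4 - 4 * (q₁ + q₂) + (q₁ - q₂) ^ 2)) / 2) :
    w₁ < w₂ ∧ w₂ < 0 ∧ 0 < w₃ ∧ w₃ < w₄ := by
  have hs : q₁ + q₂ < 2 := by nlinarith [sq_nonneg (q₁ - q₂)]
  have hap : (0:ℝ) < 4 + 4 * (q₁ + q₂) + (q₁ - q₂) ^ 2 := by nlinarith
  have ha : 0 < Real.sqrt (4 + 4 * (q₁ + q₂) + (q₁ - q₂) ^ 2) := Real.sqrt_pos.mpr hap
  have hb : 0 < Real.sqrt (4 - 4 * (q₁ + q₂) + (q₁ - q₂) ^ 2) := Real.sqrt_pos.mpr hΔm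
  have ha2 : Real.sqrt (4 + 4 * (q₁ + q₂) + (q₁ - q₂) ^ 2) < 2 + (q₁ + q₂) := by
    rw [show (2 + (q₁ + q₂)) = Real.sqrt ((2 + (q₁ + q₂))^2) by
      rw [Real.sqrt_sq (by linarith)]]
    apply Real.sqrt_lt_sqrt (le_of_lt hap)
    nlinarith
  have hb2 : Real.sqrt (4 - 4 * (q₁ + q₂) + (q₁ - q₂) ^ 2) < 2 - (q₁ + q₂) := by
    rw [show (2 - (q₁ + q₂)) = Real.sqrt ((2 - (q₁ + q₂))^2) by
      rw [Real.sqrt_sq (by linarith)]]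
    apply Real.sqrt_lt_sqrt (le_of_lt hΔm)
    nlinarith
  refine ⟨by rw [hw₁, hw₂]; linarith, by rw [hw₂]; linarith,
    by rw [hw₃]; linarith, by rw [hw₃, hw₄]; linarith⟩
end

section
/- Let q₁, q₂ be real numbers with 0 < q₁ < 2, 0 < q₂ < 2 and Δ₋ > 0. Then Q(w) > 0 for every real w with w₂ < w < w₃ (so the spindle metric is positive definite on the interval (w₂, w₃)). -/
/-- `Q(w) > 0` on the open interval `(w₂, w₃)`, so the spindle metric is
positive definite there. -/
theorem spindle_quartic_positive (q₁ q₂ : ℝ)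
    (hq₁ : 0 < q₁) (hq₁' : q₁ < 2) (hq₂ : 0 < q₂) (hq₂' : q₂ < 2)
    (hΔm : 0 < 4 - 4 * (q₁ + q₂) + (q₁ - q₂) ^ 2)
    (w₂ w₃ : ℝ)
    (hw₂ : w₂ = (-2 - (q₁ + q₂) + Real.sqrt (4 + 4 * (q₁ + q₂) + (q₁ - q₂) ^ 2)) / 2)
    (hw₃ : w₃ = (2 - (q₁ + q₂) - Real.sqrt (4 - 4 * (q₁ + q₂) + (q₁ - q₂) ^ 2)) / 2) :
    ∀ w : ℝ, w₂ < w → w < w₃ → 0 < ((w + q₁) * (w + q₂)) ^ 2 - 4 * w ^ 2 := by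
  intro w hw2 hw3
  set sp := Real.sqrt (4 + 4 * (q₁ + q₂) + (q₁ - q₂) ^ 2) with hsp
  set sm := Real.sqrt (4 - 4 * (q₁ + q₂) + (q₁ - q₂) ^ 2) with hsm
  have hsp2 : sp ^ 2 = 4 + 4 * (q₁ + q₂) + (q₁ - q₂) ^ 2 :=
    Real.sq_sqrt (by nlinarith)
  have hsm2 : sm ^ 2 = 4 - 4 * (q₁ + q₂) + (q₁ - q₂) ^ 2 :=
    Real.sq_sqrt (by nlinarith)
  have hsp0 : 0 ≤ sp := Real.sqrt_nonneg _
  have hsm0 : 0 < sm := Real.sqrt_pos.mpr hΔm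
  -- from w₂ < w : sp < 2w + 2 + (q₁+q₂)
  have h1 : sp < 2 * w + 2 + (q₁ + q₂) := by rw [hw₂] at hw2; linarith
  -- from w < w₃ : sm < 2 - (q₁+q₂) - 2w
  have h2 : sm < 2 - (q₁ + q₂) - 2 * w := by rw [hw₃] at hw3; linarith
  -- factor positivity
  have hplus : 0 < (w + q₁) * (w + q₂) + 2 * w := by nlinarith [sq_nonneg sp]
  have hminus : 0 < (w + q₁) * (w + q₂) - 2 * w := by nlinarith [sq_nonneg sm]
  nlinarith [mul_pos hplus hminus]
end

section
/- Let q₁, q₂ be real numbers with 0 < q₁ < 2, 0 < q₂ < 2 and Δ₋ > 0. Then w₂ + q₁ > 0 and w₂ + q₂ > 0, and consequently Λ(w) = (w+q₁)(w+q₂) > 0 for every w in the closed interval [w₂, w₃]. -/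
/-- `w₂ + q₁ > 0` and `w₂ + q₂ > 0`, hence `Λ(w) = (w+q₁)(w+q₂) > 0` on the
closed interval `[w₂, w₃]`. -/
theorem spindle_Lambda_positive (q₁ q₂ : ℝ)
    (hq₁ : 0 < q₁) (hq₁' : q₁ < 2) (hq₂ : 0 < q₂) (hq₂' : q₂ < 2)
    (hΔm : 0 < 4 - 4 * (q₁ + q₂) + (q₁ - q₂) ^ 2)
    (w₂ w₃ : ℝ)
    (hw₂ : w₂ = (-2 - (q₁ + q₂) + Real.sqrt (4 + 4 * (q₁ + q₂) + (q₁ - q₂) ^ 2)) / 2)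
    (hw₃ : w₃ = (2 - (q₁ + q₂) - Real.sqrt (4 - 4 * (q₁ + q₂) + (q₁ - q₂) ^ 2)) / 2) :
    0 < w₂ + q₁ ∧ 0 < w₂ + q₂ ∧
      ∀ w : ℝ, w₂ ≤ w → w ≤ w₃ → 0 < (w + q₁) * (w + q₂) := by
  set Δ := 4 + 4 * (q₁ + q₂) + (q₁ - q₂) ^ 2 with hΔ
  have hΔpos : 0 < Δ := by nlinarith
  have hs : Real.sqrt Δ ^ 2 = Δ := Real.sq_sqrt hΔpos.le
  have hspos : 0 < Real.sqrt Δ := Real.sqrt_pos.mpr hΔpos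
  have h1 : 2 + q₂ - q₁ < Real.sqrt Δ := by
    rcases le_or_gt (2 + q₂ - q₁) 0 with h | h
    · linarith
    · nlinarith [sq_nonneg (Real.sqrt Δ - (2 + q₂ - q₁))]
  have h2 : 2 + q₁ - q₂ < Real.sqrt Δ := by
    rcases le_or_gt (2 + q₁ - q₂) 0 with h | h
    · linarith
    · nlinarith [sq_nonneg (Real.sqrt Δ - (2 + q₁ - q₂))]
  have hA : 0 < w₂ + q₁ := by rw [hw₂]; linarith
  have hB : 0 < w₂ + q₂ := by rw [hw₂]; linarith
  exact ⟨hA, hB, fun w hw _ => mul_pos (by linarith) (by linarith)⟩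
end

section
/- Let q₁, q₂ be real numbers with q₁ > 0, q₂ > 0 and Δ₋ ≥ 0, and let Q(w) = ((w+q₁)(w+q₂))² − 4w². Then the derivative of Q satisfies Q'(w₂) = 2√Δ₊ · Λ(w₂) and Q'(w₃) = −2√Δ₋ · Λ(w₃), where Λ(w) = (w+q₁)(w+q₂). (These identities encode the conical deficit angles Δ± of the spindle metric at its two poles w₂ and w₃.) -/
/-! `Q = (Λ + 2w)(Λ - 2w)`, and `Λ(w) ± 2w = w² + (q₁ + q₂ ± 2) w + q₁q₂` is a monic quadratic of
discriminant `Δ±`. The pole `w₂` is a root of `Λ + 2w` and `w₃` one of `Λ - 2w`; at a root of one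
factor, `Q'` is the other factor times the derivative `2w + q₁ + q₂ ± 2` of the vanishing one, which
by the quadratic formula is `±√Δ±`. -/

lemma monic_quadratic_eq_zero_of_two_mul_add_eq {b c s w : ℝ} (hs : s ^ 2 = b ^ 2 - 4 * c)
    (hw : 2 * w + b = s) : w ^ 2 + b * w + c = 0 := by
  linear_combination (1 / 4 : ℝ) * hs + (1 / 4 : ℝ) * (2 * w + b + s) * hw

lemma hasDerivAt_sq_mul_sub_four_mul_sq (q₁ q₂ w : ℝ) :
    HasDerivAt (fun w : ℝ => ((w + q₁) * (w + q₂)) ^ 2 - 4 * w ^ 2)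
      (2 * ((w + q₁) * (w + q₂)) * (2 * w + q₁ + q₂) - 8 * w) w := by
  have hΛ := ((hasDerivAt_id' w).add_const q₁).mul ((hasDerivAt_id' w).add_const q₂)
  refine ((hΛ.pow 2).sub ((hasDerivAt_pow 2 w).const_mul 4)).congr_deriv ?_
  rw [Pi.mul_apply]
  push_cast
  ring

lemma deriv_sq_mul_sub_four_mul_sq_of_root {q₁ q₂ ε s w : ℝ} (hε : ε ^ 2 = 4)
    (hs : s ^ 2 = (q₁ + q₂ + ε) ^ 2 - 4 * (q₁ * q₂)) (hw : 2 * w + (q₁ + q₂ + ε) = s) :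
    deriv (fun w : ℝ => ((w + q₁) * (w + q₂)) ^ 2 - 4 * w ^ 2) w =
      2 * s * ((w + q₁) * (w + q₂)) := by
  have hroot : (w + q₁) * (w + q₂) + ε * w = 0 := by
    linear_combination monic_quadratic_eq_zero_of_two_mul_add_eq hs hw
  rw [(hasDerivAt_sq_mul_sub_four_mul_sq q₁ q₂ w).deriv]
  linear_combination (-2 * ε) * hroot + 2 * w * hε + 2 * ((w + q₁) * (w + q₂)) * hw

/-- The derivative of `Q(w) = ((w+q₁)(w+q₂))² − 4w²` at the two poles `w₂, w₃`
of the spindle: `Q'(w₂) = 2√Δ₊ Λ(w₂)` and `Q'(w₃) = −2√Δ₋ Λ(w₃)`, encoding the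
conical deficit angles `Δ±`. -/
theorem spindle_deriv_at_poles (q₁ q₂ : ℝ) (hq₁ : 0 < q₁) (hq₂ : 0 < q₂)
    (hΔm : 0 ≤ 4 - 4 * (q₁ + q₂) + (q₁ - q₂) ^ 2)
    (w₂ w₃ : ℝ)
    (hw₂ : w₂ = (-2 - (q₁ + q₂) + Real.sqrt (4 + 4 * (q₁ + q₂) + (q₁ - q₂) ^ 2)) / 2)
    (hw₃ : w₃ = (2 - (q₁ + q₂) - Real.sqrt (4 - 4 * (q₁ + q₂) + (q₁ - q₂) ^ 2)) / 2) :
    deriv (fun w : ℝ => ((w + q₁) * (w + q₂)) ^ 2 - 4 * w ^ 2) w₂ =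
      2 * Real.sqrt (4 + 4 * (q₁ + q₂) + (q₁ - q₂) ^ 2) * ((w₂ + q₁) * (w₂ + q₂)) ∧
    deriv (fun w : ℝ => ((w + q₁) * (w + q₂)) ^ 2 - 4 * w ^ 2) w₃ =
      -(2 * Real.sqrt (4 - 4 * (q₁ + q₂) + (q₁ - q₂) ^ 2)) * ((w₃ + q₁) * (w₃ + q₂)) := by
  have hΔp : 0 ≤ 4 + 4 * (q₁ + q₂) + (q₁ - q₂) ^ 2 := by linarith
  constructor
  · refine deriv_sq_mul_sub_four_mul_sq_of_root (ε := 2) (by norm_num) ?_ (by rw [hw₂]; ring)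
    rw [Real.sq_sqrt hΔp]
    ring
  · rw [neg_mul_eq_mul_neg]
    refine deriv_sq_mul_sub_four_mul_sq_of_root (ε := -2) (by norm_num) ?_ (by rw [hw₃]; ring)
    rw [neg_sq, Real.sq_sqrt hΔm]
    ring
end

section
/- Let q₁, q₂ be real numbers with 0 < q₁ < 2, 0 < q₂ < 2 and Δ₋ > 0. Then the following two identities hold: w₃/(w₃+q₁) − w₂/(w₂+q₁) = (√Δ₊ − √Δ₋)/4 − (q₁−q₂)/2, and w₃/(w₃+q₂) − w₂/(w₂+q₂) = (√Δ₊ − √Δ₋)/4 + (q₁−q₂)/2. (These evaluate the magnetic flux integrals (1/2π)∫_Σ F_i = (Δz/2π)[w/(w+q_i)]_{w₂}^{w₃} of the two gauge fields through the spindle.) -/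
/-- Evaluation of the magnetic flux integrals
`[w/(w+qᵢ)]_{w₂}^{w₃}` of the two gauge fields through the spindle. -/
theorem spindle_flux_integrals (q₁ q₂ : ℝ)
    (hq₁ : 0 < q₁) (hq₁' : q₁ < 2) (hq₂ : 0 < q₂) (hq₂' : q₂ < 2)
    (hΔm : 0 < 4 - 4 * (q₁ + q₂) + (q₁ - q₂) ^ 2)
    (w₂ w₃ : ℝ)
    (hw₂ : w₂ = (-2 - (q₁ + q₂) + Real.sqrt (4 + 4 * (q₁ + q₂) + (q₁ - q₂) ^ 2)) / 2)
    (hw₃ : w₃ = (2 - (q₁ + q₂) - Real.sqrt (4 - 4 * (q₁ + q₂) + (q₁ - q₂) ^ 2)) / 2) :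
    w₃ / (w₃ + q₁) - w₂ / (w₂ + q₁) =
      (Real.sqrt (4 + 4 * (q₁ + q₂) + (q₁ - q₂) ^ 2) -
        Real.sqrt (4 - 4 * (q₁ + q₂) + (q₁ - q₂) ^ 2)) / 4 - (q₁ - q₂) / 2 ∧
    w₃ / (w₃ + q₂) - w₂ / (w₂ + q₂) =
      (Real.sqrt (4 + 4 * (q₁ + q₂) + (q₁ - q₂) ^ 2) -
        Real.sqrt (4 - 4 * (q₁ + q₂) + (q₁ - q₂) ^ 2)) / 4 + (q₁ - q₂) / 2 := by
  set a := Real.sqrt (4 + 4 * (q₁ + q₂) + (q₁ - q₂) ^ 2) with ha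
  set b := Real.sqrt (4 - 4 * (q₁ + q₂) + (q₁ - q₂) ^ 2) with hb
  have ha0 : 0 ≤ a := Real.sqrt_nonneg _
  have hb0 : 0 ≤ b := Real.sqrt_nonneg _
  have ha2 : a ^ 2 = 4 + 4 * (q₁ + q₂) + (q₁ - q₂) ^ 2 := by
    rw [ha]; exact Real.sq_sqrt (by nlinarith)
  have hb2 : b ^ 2 = 4 - 4 * (q₁ + q₂) + (q₁ - q₂) ^ 2 := by
    rw [hb]; exact Real.sq_sqrt (by nlinarith)
  have h1 : (0:ℝ) < w₂ + q₁ := by rw [hw₂]; nlinarith [ha2, ha0]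
  have h2 : (0:ℝ) < w₂ + q₂ := by rw [hw₂]; nlinarith [ha2, ha0]
  have h3 : (0:ℝ) < w₃ + q₁ := by rw [hw₃]; nlinarith [hb2, hb0]
  have h4 : (0:ℝ) < w₃ + q₂ := by rw [hw₃]; nlinarith [hb2, hb0]
  have e1 : w₂ / (w₂ + q₁) = (2 + q₁ - q₂ - a) / 4 := by
    rw [div_eq_iff h1.ne', hw₂]; linear_combination ha2 / 8
  have e2 : w₃ / (w₃ + q₁) = (2 - q₁ + q₂ - b) / 4 := by
    rw [div_eq_iff h3.ne', hw₃]; linear_combination -hb2 / 8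
  have e3 : w₂ / (w₂ + q₂) = (2 - q₁ + q₂ - a) / 4 := by
    rw [div_eq_iff h2.ne', hw₂]; linear_combination ha2 / 8
  have e4 : w₃ / (w₃ + q₂) = (2 + q₁ - q₂ - b) / 4 := by
    rw [div_eq_iff h4.ne', hw₃]; linear_combination -hb2 / 8
  constructor
  · rw [e2, e1]; ring
  · rw [e4, e3]; ring
end

section
/- Let n₊, n₋ be positive real numbers and k a real number with S := 2(n₊²+n₋²) − k² > 0. Define q₁ = (n₋²−n₊²+k√S)/S, q₂ = (n₋²−n₊²−k√S)/S, and Δz = π√S/(n₊ n₋). Then the conical regularity conditions hold: (√Δ₊/2)·Δz = 2π/n₊ and (√Δ₋/2)·Δz = 2π/n₋, where Δ₊ = 4 + 4(q₁+q₂) + (q₁−q₂)² and Δ₋ = 4 − 4(q₁+q₂) + (q₁−q₂)². -/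
/-!
Since `q₁ + q₂ = 2(n₋² - n₊²)/S` and `(q₁ - q₂)² = 4k²/S`, the definition of `S` collapses the
pole factors to perfect squares, `Δ₊ = 16 n₋²/S` and `Δ₋ = 16 n₊²/S`. Hence
`√Δ₊/2 · Δz = (2n₋/√S) · π√S/(n₊n₋) = 2π/n₊`, and symmetrically at the other pole.
-/

open Real

section PoleFactors

variable {S r a k q₁ q₂ : ℝ}

theorem four_add_four_mul_add_add_sub_sq_eq (hS : S ≠ 0) (hr : r ^ 2 = S)
    (hq₁ : q₁ = (a + k * r) / S) (hq₂ : q₂ = (a - k * r) / S) :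
    4 + 4 * (q₁ + q₂) + (q₁ - q₂) ^ 2 = 4 * (S + 2 * a + k ^ 2) / S := by
  subst hq₁ hq₂
  field_simp
  linear_combination 4 * k ^ 2 * hr

theorem four_sub_four_mul_add_add_sub_sq_eq (hS : S ≠ 0) (hr : r ^ 2 = S)
    (hq₁ : q₁ = (a + k * r) / S) (hq₂ : q₂ = (a - k * r) / S) :
    4 - 4 * (q₁ + q₂) + (q₁ - q₂) ^ 2 = 4 * (S - 2 * a + k ^ 2) / S := by
  subst hq₁ hq₂
  field_simp
  linear_combination 4 * k ^ 2 * hr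

end PoleFactors

theorem sqrt_sixteen_mul_sq_div_div_two_mul_period {n m S : ℝ} (hn : 0 < n) (hS : 0 < S) :
    √(16 * n ^ 2 / S) / 2 * (π * √S / (m * n)) = 2 * π / m := by
  have hsqrtS : √S ≠ 0 := (Real.sqrt_pos.mpr hS).ne'
  rw [Real.sqrt_div (by positivity), show 16 * n ^ 2 = (4 * n) ^ 2 by ring,
    Real.sqrt_sq (by positivity)]
  field_simp
  norm_num

/-- Conical regularity conditions at the two poles of the spindle:
`(√Δ₊/2)·Δz = 2π/nplus` and `(√Δ₋/2)·Δz = 2π/nminus` for the quantised charges. -/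
theorem spindle_conical_regularity (nplus nminus k : ℝ) (hplus : 0 < nplus) (hminus : 0 < nminus)
    (hS : 0 < 2 * (nplus ^ 2 + nminus ^ 2) - k ^ 2)
    (q₁ q₂ Δz : ℝ)
    (hq₁ : q₁ = (nminus ^ 2 - nplus ^ 2 + k * Real.sqrt (2 * (nplus ^ 2 + nminus ^ 2) - k ^ 2)) /
      (2 * (nplus ^ 2 + nminus ^ 2) - k ^ 2))
    (hq₂ : q₂ = (nminus ^ 2 - nplus ^ 2 - k * Real.sqrt (2 * (nplus ^ 2 + nminus ^ 2) - k ^ 2)) /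
      (2 * (nplus ^ 2 + nminus ^ 2) - k ^ 2))
    (hΔz : Δz = Real.pi * Real.sqrt (2 * (nplus ^ 2 + nminus ^ 2) - k ^ 2) / (nplus * nminus)) :
    Real.sqrt (4 + 4 * (q₁ + q₂) + (q₁ - q₂) ^ 2) / 2 * Δz = 2 * Real.pi / nplus ∧
    Real.sqrt (4 - 4 * (q₁ + q₂) + (q₁ - q₂) ^ 2) / 2 * Δz = 2 * Real.pi / nminus := by
  have hr := Real.sq_sqrt hS.le
  have hΔplus : 4 + 4 * (q₁ + q₂) + (q₁ - q₂) ^ 2 =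
      16 * nminus ^ 2 / (2 * (nplus ^ 2 + nminus ^ 2) - k ^ 2) := by
    rw [four_add_four_mul_add_add_sub_sq_eq hS.ne' hr hq₁ hq₂]
    ring
  have hΔminus : 4 - 4 * (q₁ + q₂) + (q₁ - q₂) ^ 2 =
      16 * nplus ^ 2 / (2 * (nplus ^ 2 + nminus ^ 2) - k ^ 2) := by
    rw [four_sub_four_mul_add_add_sub_sq_eq hS.ne' hr hq₁ hq₂]
    ring
  constructor
  · rw [hΔplus, hΔz]
    exact sqrt_sixteen_mul_sq_div_div_two_mul_period hminus hS
  · rw [hΔminus, hΔz, mul_comm nplus]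
    exact sqrt_sixteen_mul_sq_div_div_two_mul_period hplus hS
end

section
/- Let n₊, n₋ be positive real numbers and k a real number with S := 2(n₊²+n₋²) − k² > 0. Define q₁ = (n₋²−n₊²+k√S)/S, q₂ = (n₋²−n₊²−k√S)/S, and Δz = π√S/(n₊ n₋), and assume 0 < q₁ < 2 and 0 < q₂ < 2. With w₂ = (−2−(q₁+q₂)+√Δ₊)/2 and w₃ = (2−(q₁+q₂)−√Δ₋)/2 (where Δ± = 4 ± 4(q₁+q₂) + (q₁−q₂)²), the flux quantization identities hold: (Δz/(2π))·(w₃/(w₃+q₁) − w₂/(w₂+q₁)) = (n₋ − n₊ − k)/(2 n₊ n₋) and (Δz/(2π))·(w₃/(w₃+q₂) − w₂/(w₂+q₂)) = (n₋ − n₊ + k)/(2 n₊ n₋). -/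
/-!
Rescale by `s = √S`: with `x = n₊/s`, `y = n₋/s`, `κ = k/s` the constraint reads
`2(x² + y²) - κ² = 1`, so `Δ₊ = (4y)²`, `Δ₋ = (4x)²`, and the endpoints become
`w₂ = x² - (1 - y)²`, `w₃ = (1 - x)² - y²`, while `q₁ = y² - x² + κ`. Modulo the constraint,
`2 w₃ = (w₃ + q₁)(1 - 2x - κ)` and `2 w₂ = (w₂ + q₁)(1 + κ - 2y)`, so `w / (w + q₁)` is linear
at both endpoints and the bracket equals `y - x - κ`. The flux for `q₂` is the case `κ ↦ -κ`.
-/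

theorem div_add_eq_of_eq_add_mul {K : Type*} [Field K] {w q e : K} (hq : q ≠ 0)
    (h : w = (w + q) * e) : w / (w + q) = e := by
  have hwq : w + q ≠ 0 := by
    rintro hwq
    exact hq (by linear_combination (1 - e) * hwq - h)
  rw [div_eq_iff hwq]
  linear_combination h

theorem flux_eq_of_normalized {K : Type*} [Field K] [NeZero (2 : K)] {x y κ q w₂ w₃ : K}
    (hc : 2 * (x ^ 2 + y ^ 2) - κ ^ 2 = 1) (hq : q = y ^ 2 - x ^ 2 + κ) (hq0 : q ≠ 0)
    (hw₂ : w₂ = x ^ 2 - (1 - y) ^ 2) (hw₃ : w₃ = (1 - x) ^ 2 - y ^ 2) :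
    w₃ / (w₃ + q) - w₂ / (w₂ + q) = y - x - κ := by
  have hw₃q : w₃ = (w₃ + q) * ((1 - 2 * x - κ) / 2) := by
    rw [hw₃, hq]; field_simp; linear_combination -hc
  have hw₂q : w₂ = (w₂ + q) * ((1 + κ - 2 * y) / 2) := by
    rw [hw₂, hq]; field_simp; linear_combination hc
  rw [div_add_eq_of_eq_add_mul hq0 hw₃q, div_add_eq_of_eq_add_mul hq0 hw₂q]
  field_simp
  ring

theorem spindle_w₂_eq {x y κ q₁ q₂ : ℝ} (hy : 0 ≤ y) (hc : 2 * (x ^ 2 + y ^ 2) - κ ^ 2 = 1)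
    (hq₁ : q₁ = y ^ 2 - x ^ 2 + κ) (hq₂ : q₂ = y ^ 2 - x ^ 2 - κ) :
    (-2 - (q₁ + q₂) + √(4 + 4 * (q₁ + q₂) + (q₁ - q₂) ^ 2)) / 2 = x ^ 2 - (1 - y) ^ 2 := by
  have hΔ : 4 + 4 * (q₁ + q₂) + (q₁ - q₂) ^ 2 = (4 * y) ^ 2 := by
    rw [hq₁, hq₂]; linear_combination -4 * hc
  rw [hΔ, Real.sqrt_sq (by positivity), hq₁, hq₂]
  ring

theorem spindle_w₃_eq {x y κ q₁ q₂ : ℝ} (hx : 0 ≤ x) (hc : 2 * (x ^ 2 + y ^ 2) - κ ^ 2 = 1)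
    (hq₁ : q₁ = y ^ 2 - x ^ 2 + κ) (hq₂ : q₂ = y ^ 2 - x ^ 2 - κ) :
    (2 - (q₁ + q₂) - √(4 - 4 * (q₁ + q₂) + (q₁ - q₂) ^ 2)) / 2 = (1 - x) ^ 2 - y ^ 2 := by
  have hΔ : 4 - 4 * (q₁ + q₂) + (q₁ - q₂) ^ 2 = (4 * x) ^ 2 := by
    rw [hq₁, hq₂]; linear_combination -4 * hc
  rw [hΔ, Real.sqrt_sq (by positivity), hq₁, hq₂]
  ring

theorem spindle_flux_quantization_general (nplus nminus k : ℝ) (hplus : 0 < nplus) (hminus : 0 < nminus)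
    (hS : 0 < 2 * (nplus ^ 2 + nminus ^ 2) - k ^ 2)
    (q₁ q₂ Δz : ℝ)
    (hq₁ : q₁ = (nminus ^ 2 - nplus ^ 2 + k * Real.sqrt (2 * (nplus ^ 2 + nminus ^ 2) - k ^ 2)) /
      (2 * (nplus ^ 2 + nminus ^ 2) - k ^ 2))
    (hq₂ : q₂ = (nminus ^ 2 - nplus ^ 2 - k * Real.sqrt (2 * (nplus ^ 2 + nminus ^ 2) - k ^ 2)) /
      (2 * (nplus ^ 2 + nminus ^ 2) - k ^ 2))
    (hΔz : Δz = Real.pi * Real.sqrt (2 * (nplus ^ 2 + nminus ^ 2) - k ^ 2) / (nplus * nminus))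
    (hq₁pos : 0 < q₁) (hq₂pos : 0 < q₂)
    (w₂ w₃ : ℝ)
    (hw₂ : w₂ = (-2 - (q₁ + q₂) + Real.sqrt (4 + 4 * (q₁ + q₂) + (q₁ - q₂) ^ 2)) / 2)
    (hw₃ : w₃ = (2 - (q₁ + q₂) - Real.sqrt (4 - 4 * (q₁ + q₂) + (q₁ - q₂) ^ 2)) / 2) :
    Δz / (2 * Real.pi) * (w₃ / (w₃ + q₁) - w₂ / (w₂ + q₁)) =
      (nminus - nplus - k) / (2 * nplus * nminus) ∧
    Δz / (2 * Real.pi) * (w₃ / (w₃ + q₂) - w₂ / (w₂ + q₂)) =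
      (nminus - nplus + k) / (2 * nplus * nminus) := by
  set s := √(2 * (nplus ^ 2 + nminus ^ 2) - k ^ 2)
  have hs : 0 < s := Real.sqrt_pos.mpr hS
  have hs2 : s ^ 2 = 2 * (nplus ^ 2 + nminus ^ 2) - k ^ 2 := Real.sq_sqrt hS.le
  have hc : 2 * ((nplus / s) ^ 2 + (nminus / s) ^ 2) - (k / s) ^ 2 = 1 := by
    field_simp; linear_combination -hs2
  have hq₁' : q₁ = (nminus / s) ^ 2 - (nplus / s) ^ 2 + k / s := by
    rw [hq₁, ← hs2]; field_simp
  have hq₂' : q₂ = (nminus / s) ^ 2 - (nplus / s) ^ 2 - k / s := by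
    rw [hq₂, ← hs2]; field_simp
  have hw₂' := hw₂.trans (spindle_w₂_eq (by positivity) hc hq₁' hq₂')
  have hw₃' := hw₃.trans (spindle_w₃_eq (by positivity) hc hq₁' hq₂')
  have hscale : Δz / (2 * Real.pi) = s / (2 * nplus * nminus) := by
    rw [hΔz]; field_simp
  refine ⟨?_, ?_⟩
  · rw [hscale, flux_eq_of_normalized hc hq₁' hq₁pos.ne' hw₂' hw₃']
    field_simp
  · rw [hscale, flux_eq_of_normalized (κ := -(k / s)) (by linear_combination hc)
      (by linear_combination hq₂') hq₂pos.ne' hw₂' hw₃']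
    field_simp
    ring

/-- Flux quantization of the two gauge fields through the spindle:
`(Δz/2π)[w/(w+qᵢ)]_{w₂}^{w₃} = (nminus − nplus ∓ k)/(2 nplus nminus)`. -/
theorem spindle_flux_quantization (nplus nminus k : ℝ) (hplus : 0 < nplus) (hminus : 0 < nminus)
    (hS : 0 < 2 * (nplus ^ 2 + nminus ^ 2) - k ^ 2)
    (q₁ q₂ Δz : ℝ)
    (hq₁ : q₁ = (nminus ^ 2 - nplus ^ 2 + k * Real.sqrt (2 * (nplus ^ 2 + nminus ^ 2) - k ^ 2)) /
      (2 * (nplus ^ 2 + nminus ^ 2) - k ^ 2))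
    (hq₂ : q₂ = (nminus ^ 2 - nplus ^ 2 - k * Real.sqrt (2 * (nplus ^ 2 + nminus ^ 2) - k ^ 2)) /
      (2 * (nplus ^ 2 + nminus ^ 2) - k ^ 2))
    (hΔz : Δz = Real.pi * Real.sqrt (2 * (nplus ^ 2 + nminus ^ 2) - k ^ 2) / (nplus * nminus))
    (hq₁pos : 0 < q₁) (hq₁lt : q₁ < 2) (hq₂pos : 0 < q₂) (hq₂lt : q₂ < 2)
    (w₂ w₃ : ℝ)
    (hw₂ : w₂ = (-2 - (q₁ + q₂) + Real.sqrt (4 + 4 * (q₁ + q₂) + (q₁ - q₂) ^ 2)) / 2)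
    (hw₃ : w₃ = (2 - (q₁ + q₂) - Real.sqrt (4 - 4 * (q₁ + q₂) + (q₁ - q₂) ^ 2)) / 2) :
    Δz / (2 * Real.pi) * (w₃ / (w₃ + q₁) - w₂ / (w₂ + q₁)) =
      (nminus - nplus - k) / (2 * nplus * nminus) ∧
    Δz / (2 * Real.pi) * (w₃ / (w₃ + q₂) - w₂ / (w₂ + q₂)) =
      (nminus - nplus + k) / (2 * nplus * nminus) :=
  spindle_flux_quantization_general nplus nminus k hplus hminus hS q₁ q₂ Δz hq₁ hq₂ hΔz hq₁pos
    hq₂pos w₂ w₃ hw₂ hw₃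
end
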